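/- arXiv:1010.3510 — 18 statements merged into one kernel-verified Lean document; each statement's English description precedes it below -/
import Mathlib

section
/- Let M be a right modular groupoid and F a fuzzy subset of M. Then F is an (∈,∈∨q)-fuzzy interior ideal of M (i.e., F(xy) ≥ min{F(x), F(y), 1/2} for all x,y ∈ M and F((xa)y) ≥ min{F(a), 1/2} for all x,a,y ∈ M) if and only if for every t ∈ (0, 1/2], the level set U(F;t) = {x ∈ M : F(x) ≥ t}, whenever nonempty, is an interior ideal of M. -/
/-- F is an (∈,∈∨q)-fuzzy interior ideal of a right modular groupoid M
iff every nonempty level set U(F;t) with t ∈ (0, 1/2] is an interior ideal of M. -/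
theorem stmt0 {M : Type*} [Mul M]
    (hli : ∀ a b c : M, (a * b) * c = (c * b) * a)
    (F : M → ℝ) (hF0 : ∀ x, 0 ≤ F x) (hF1 : ∀ x, F x ≤ 1) :
    ((∀ x y : M, F (x * y) ≥ min (min (F x) (F y)) (1/2)) ∧
     (∀ x a y : M, F ((x * a) * y) ≥ min (F a) (1/2))) ↔
    (∀ t : ℝ, 0 < t → t ≤ 1/2 → {x : M | F x ≥ t}.Nonempty →
      ((∀ x ∈ {x : M | F x ≥ t}, ∀ y ∈ {x : M | F x ≥ t},
          x * y ∈ {x : M | F x ≥ t}) ∧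
       (∀ x y : M, ∀ a ∈ {x : M | F x ≥ t},
          (x * a) * y ∈ {x : M | F x ≥ t}))) := by
  constructor
  · rintro ⟨h1, h2⟩ t ht0 ht12 _
    constructor
    · intro x hx y hy
      have := h1 x y
      simp only [Set.mem_setOf_eq] at *
      calc t ≤ min (min (F x) (F y)) (1/2) := le_min (le_min hx hy) ht12
        _ ≤ F (x * y) := this
    · intro x y a ha
      have := h2 x a y
      simp only [Set.mem_setOf_eq] at *
      calc t ≤ min (F a) (1/2) := le_min ha ht12
        _ ≤ F ((x * a) * y) := this
  · intro h
    constructor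
    · intro x y
      set t := min (min (F x) (F y)) (1/2) with ht
      rcases lt_or_ge 0 t with htp | htn
      · have ht12 : t ≤ 1/2 := min_le_right _ _
        have hx : x ∈ {x : M | F x ≥ t} := by
          simp only [Set.mem_setOf_eq]; exact (min_le_left _ _).trans (min_le_left _ _)
        have hy : y ∈ {x : M | F x ≥ t} := by
          simp only [Set.mem_setOf_eq]; exact (min_le_left _ _).trans (min_le_right _ _)
        exact (h t htp ht12 ⟨x, hx⟩).1 x hx y hy
      · exact le_trans htn (hF0 _)
    · intro x a y
      set t := min (F a) (1/2) with ht
      rcases lt_or_ge 0 t with htp | htn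
      · have ht12 : t ≤ 1/2 := min_le_right _ _
        have ha : a ∈ {x : M | F x ≥ t} := by
          simp only [Set.mem_setOf_eq]; exact min_le_left _ _
        exact (h t htp ht12 ⟨a, ha⟩).2 x y a ha
      · exact le_trans htn (hF0 _)
end

section
/- Let M be a right modular groupoid and F a fuzzy subset of M. Then the following two conditions: (A1) for all t,r ∈ (0,1] and x,y ∈ M, if F(x) ≥ t and F(y) ≥ r then F(xy) ≥ min{t,r} or F(xy) + min{t,r} > 1, and (A2) for all t ∈ (0,1] and x,a,y ∈ M, if F(a) ≥ t then F((xa)y) ≥ t or F((xa)y) + t > 1, hold together if and only if (A3) F(xy) ≥ min{F(x), F(y), 1/2} for all x,y ∈ M and (A4) F((xa)y) ≥ min{F(a), 1/2} for all x,a,y ∈ M. -/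
/-- conditions (A1),(A2) hold together iff (A3),(A4) hold. -/
theorem stmt1 {M : Type*} [Mul M]
    (hli : ∀ a b c : M, (a * b) * c = (c * b) * a)
    (F : M → ℝ) (hF0 : ∀ x, 0 ≤ F x) (hF1 : ∀ x, F x ≤ 1) :
    ((∀ t r : ℝ, 0 < t → t ≤ 1 → 0 < r → r ≤ 1 → ∀ x y : M,
        F x ≥ t → F y ≥ r →
        (F (x * y) ≥ min t r ∨ F (x * y) + min t r > 1)) ∧
     (∀ t : ℝ, 0 < t → t ≤ 1 → ∀ x a y : M, F a ≥ t →
        (F ((x * a) * y) ≥ t ∨ F ((x * a) * y) + t > 1))) ↔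
    ((∀ x y : M, F (x * y) ≥ min (min (F x) (F y)) (1/2)) ∧
     (∀ x a y : M, F ((x * a) * y) ≥ min (F a) (1/2))) := by
  constructor
  · rintro ⟨h1, h2⟩
    constructor
    · intro x y
      set m := min (min (F x) (F y)) (1/2) with hm
      rcases le_or_gt m 0 with h | h
      · exact le_trans h (hF0 _)
      · have hm1 : m ≤ 1/2 := min_le_right _ _
        have hx : F x ≥ m := le_trans (le_trans (min_le_left _ _) (min_le_left _ _)) le_rfl
        have hy : F y ≥ m := le_trans (min_le_left _ _) (min_le_right _ _)
        rcases h1 m m h (by linarith) h (by linarith) x y hx hy with h' | h'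
        · simpa using h'
        · simp only [min_self] at h'
          linarith
    · intro x a y
      set m := min (F a) (1/2) with hm
      rcases le_or_gt m 0 with h | h
      · exact le_trans h (hF0 _)
      · have hm1 : m ≤ 1/2 := min_le_right _ _
        have ha : F a ≥ m := min_le_left _ _
        rcases h2 m h (by linarith) x a y ha with h' | h'
        · exact h'
        · linarith
  · rintro ⟨h3, h4⟩
    constructor
    · intro t r ht ht1 hr hr1 x y hx hy
      have key : F (x * y) ≥ min (min t r) (1/2) := by
        refine le_trans ?_ (h3 x y)
        exact min_le_min (min_le_min hx hy) le_rfl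
      rcases le_or_gt (min t r) (1/2) with h | h
      · left; rwa [min_eq_left h] at key
      · right
        rw [min_eq_right h.le] at key
        linarith
    · intro t ht ht1 x a y ha
      have key : F ((x * a) * y) ≥ min t (1/2) :=
        le_trans (min_le_min ha le_rfl) (h4 x a y)
      rcases le_or_gt t (1/2) with h | h
      · left; rwa [min_eq_left h] at key
      · right
        rw [min_eq_right h.le] at key
        linarith
end

section
/- Let M be a right modular groupoid and F a fuzzy subset of M. Then the following two conditions: (B1) for all t,r ∈ (0,1] and x,y ∈ M, if F(x) ≥ t and F(y) ≥ r then F(xy) ≥ min{t,r} or F(xy) + min{t,r} > 1, and (B2) for all t,r ∈ (0,1] and x,y,z ∈ M, if F(x) ≥ t and F(z) ≥ r then F((xy)z) ≥ min{t,r} or F((xy)z) + min{t,r} > 1, hold together if and only if (B3) F(xy) ≥ min{F(x), F(y), 1/2} for all x,y ∈ M and (B4) F((xy)z) ≥ min{F(x), F(z), 1/2} for all x,y,z ∈ M. -/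
lemma stmt2_aux {a b c : ℝ} (ha0 : 0 ≤ a) (ha1 : a ≤ 1) (hb0 : 0 ≤ b) (hb1 : b ≤ 1)
    (hc0 : 0 ≤ c) :
    (∀ t r : ℝ, 0 < t → t ≤ 1 → 0 < r → r ≤ 1 → a ≥ t → b ≥ r →
      (c ≥ min t r ∨ c + min t r > 1)) ↔ c ≥ min (min a b) (1/2) := by
  constructor
  · intro h
    set m := min (min a b) (1/2) with hm
    rcases eq_or_lt_of_le (le_min (le_min ha0 hb0) (by norm_num) : (0:ℝ) ≤ m) with h0 | h0
    · linarith
    · have hm1 : m ≤ 1 := le_trans (min_le_right _ _) (by norm_num)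
      have hma : a ≥ m := le_trans (min_le_left _ _) (min_le_left _ _)
      have hmb : b ≥ m := le_trans (min_le_left _ _) (min_le_right _ _)
      rcases h m m h0 hm1 h0 hm1 hma hmb with h1 | h1
      · simpa using h1
      · have : c > 1 - m := by linarith [min_self m ▸ h1]
        have : c > 1/2 := by
          have : m ≤ 1/2 := min_le_right _ _
          linarith
        exact le_of_lt (lt_of_le_of_lt (min_le_right _ _) this)
  · intro h t r ht0 ht1 hr0 hr1 hat hbr
    have hs : min t r ≤ min a b := min_le_min hat hbr
    rcases le_or_gt (min t r) (1/2) with hhalf | hhalf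
    · left
      calc min t r = min (min t r) (1/2) := (min_eq_left hhalf).symm
        _ ≤ min (min a b) (1/2) := min_le_min hs le_rfl
        _ ≤ c := h
    · right
      have hmge : (1:ℝ)/2 ≤ min (min a b) (1/2) := le_min (by linarith [lt_of_lt_of_le hhalf hs]) le_rfl
      have : (1:ℝ)/2 ≤ c := le_trans hmge h
      linarith

/-- conditions (B1),(B2) hold together iff (B3),(B4) hold. -/
theorem stmt2 {M : Type*} [Mul M]
    (hli : ∀ a b c : M, (a * b) * c = (c * b) * a)
    (F : M → ℝ) (hF0 : ∀ x, 0 ≤ F x) (hF1 : ∀ x, F x ≤ 1) :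
    ((∀ t r : ℝ, 0 < t → t ≤ 1 → 0 < r → r ≤ 1 → ∀ x y : M,
        F x ≥ t → F y ≥ r →
        (F (x * y) ≥ min t r ∨ F (x * y) + min t r > 1)) ∧
     (∀ t r : ℝ, 0 < t → t ≤ 1 → 0 < r → r ≤ 1 → ∀ x y z : M,
        F x ≥ t → F z ≥ r →
        (F ((x * y) * z) ≥ min t r ∨ F ((x * y) * z) + min t r > 1))) ↔
    ((∀ x y : M, F (x * y) ≥ min (min (F x) (F y)) (1/2)) ∧
     (∀ x y z : M, F ((x * y) * z) ≥ min (min (F x) (F z)) (1/2))) := by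
  constructor
  · rintro ⟨h1, h2⟩
    constructor
    · intro x y
      exact (stmt2_aux (hF0 x) (hF1 x) (hF0 y) (hF1 y) (hF0 _)).mp
        (fun t r ht0 ht1 hr0 hr1 hat hbr => h1 t r ht0 ht1 hr0 hr1 x y hat hbr)
    · intro x y z
      exact (stmt2_aux (hF0 x) (hF1 x) (hF0 z) (hF1 z) (hF0 _)).mp
        (fun t r ht0 ht1 hr0 hr1 hat hbr => h2 t r ht0 ht1 hr0 hr1 x y z hat hbr)
  · rintro ⟨h3, h4⟩
    constructor
    · intro t r ht0 ht1 hr0 hr1 x y hat hbr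
      exact (stmt2_aux (hF0 x) (hF1 x) (hF0 y) (hF1 y) (hF0 _)).mpr (h3 x y)
        t r ht0 ht1 hr0 hr1 hat hbr
    · intro t r ht0 ht1 hr0 hr1 x y z hat hbr
      exact (stmt2_aux (hF0 x) (hF1 x) (hF0 z) (hF1 z) (hF0 _)).mpr (h4 x y z)
        t r ht0 ht1 hr0 hr1 hat hbr
end

section
/- Let M be a right modular groupoid with a left identity e (ex = x for all x ∈ M). Then every (∈,∈∨q)-fuzzy bi-ideal F of M (i.e., F(xy) ≥ min{F(x), F(y), 1/2} and F((xy)z) ≥ min{F(x), F(z), 1/2} for all x,y,z ∈ M) is an (∈,∈∨q)-fuzzy (1,2)-ideal of M, i.e., F(xy) ≥ min{F(x), F(y), 1/2} for all x,y ∈ M and F((xa)(yz)) ≥ min{F(x), F(y), F(z), 1/2} for all x,a,y,z ∈ M. -/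
/-- every (∈,∈∨q)-fuzzy bi-ideal of a right modular groupoid with
left identity is an (∈,∈∨q)-fuzzy (1,2)-ideal. -/
theorem stmt3 {M : Type*} [Mul M]
    (hli : ∀ a b c : M, (a * b) * c = (c * b) * a)
    (e : M) (he : ∀ x : M, e * x = x)
    (F : M → ℝ) (hF0 : ∀ x, 0 ≤ F x) (hF1 : ∀ x, F x ≤ 1)
    (hb1 : ∀ x y : M, F (x * y) ≥ min (min (F x) (F y)) (1/2))
    (hb2 : ∀ x y z : M, F ((x * y) * z) ≥ min (min (F x) (F z)) (1/2)) :
    (∀ x y : M, F (x * y) ≥ min (min (F x) (F y)) (1/2)) ∧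
    (∀ x a y z : M,
      F ((x * a) * (y * z)) ≥ min (min (F x) (min (F y) (F z))) (1/2)) := by
  refine ⟨hb1, fun x a y z => ?_⟩
  rw [hli x a (y * z)]
  refine le_trans ?_ (hb2 (y * z) a x)
  refine le_min (le_min ?_ ?_) (min_le_right _ _)
  · exact le_trans (min_le_min (min_le_right _ _) le_rfl) (hb1 y z)
  · exact (min_le_left _ _).trans (min_le_left _ _)
end

section
/- Let M be a right modular groupoid with a left identity e (ex = x for all x ∈ M). Then every (∈,∈∨q)-fuzzy interior ideal F of M (i.e., F(xy) ≥ min{F(x), F(y), 1/2} for all x,y ∈ M and F((xa)y) ≥ min{F(a), 1/2} for all x,a,y ∈ M) is an (∈,∈∨q)-fuzzy (1,2)-ideal of M, i.e., F(xy) ≥ min{F(x), F(y), 1/2} for all x,y ∈ M and F((xa)(yz)) ≥ min{F(x), F(y), F(z), 1/2} for all x,a,y,z ∈ M. -/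
/-- every (∈,∈∨q)-fuzzy interior ideal of a right modular groupoid
with left identity is an (∈,∈∨q)-fuzzy (1,2)-ideal. -/
theorem stmt4 {M : Type*} [Mul M]
    (hli : ∀ a b c : M, (a * b) * c = (c * b) * a)
    (e : M) (he : ∀ x : M, e * x = x)
    (F : M → ℝ) (hF0 : ∀ x, 0 ≤ F x) (hF1 : ∀ x, F x ≤ 1)
    (hi1 : ∀ x y : M, F (x * y) ≥ min (min (F x) (F y)) (1/2))
    (hi2 : ∀ x a y : M, F ((x * a) * y) ≥ min (F a) (1/2)) :
    (∀ x y : M, F (x * y) ≥ min (min (F x) (F y)) (1/2)) ∧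
    (∀ x a y z : M,
      F ((x * a) * (y * z)) ≥ min (min (F x) (min (F y) (F z))) (1/2)) := by
  -- From `x*a = (e*x)*a = (a*x)*e` and the interior-ideal property,
  -- we get `F (x*a) ≥ min (F x) (1/2)`.
  have key : ∀ u v : M, F (u * v) ≥ min (F u) (1/2) := by
    intro u v
    have h : (v * u) * e = u * v := by rw [hli v u e, he]
    have := hi2 v u e
    rwa [h] at this
  refine ⟨hi1, fun x a y z => ?_⟩
  have h1 := hi1 (x * a) (y * z)
  have h2 := key x a
  have h3 := hi1 y z
  refine le_trans ?_ h1
  refine le_min (le_min ?_ ?_) (min_le_right _ _)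
  · exact le_trans (le_min (le_trans (min_le_left _ _) (min_le_left _ _))
      (min_le_right _ _)) h2
  · exact le_trans (le_min (le_trans (min_le_left _ _) (min_le_right _ _))
      (min_le_right _ _)) h3
end

section
/- Let M be a right modular groupoid with a left identity e (ex = x for all x ∈ M). Then M is completely regular (i.e., for each a ∈ M there exist x, y, z ∈ M with a = (ax)a, a = a²y, and a = za²) if and only if for each a ∈ M there exists w ∈ M such that a = (a²w)a², where a² denotes aa. -/
/-- a right modular groupoid with left identity is completely
regular iff each a satisfies a = (a²w)a² for some w. -/
theorem stmt6 {M : Type*} [Mul M]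
    (hli : ∀ a b c : M, (a * b) * c = (c * b) * a)
    (e : M) (he : ∀ x : M, e * x = x) :
    ((∀ a : M, ∃ x, a = (a * x) * a) ∧
     (∀ a : M, ∃ y, a = (a * a) * y) ∧
     (∀ a : M, ∃ z, a = z * (a * a))) ↔
    (∀ a : M, ∃ w, a = ((a * a) * w) * (a * a)) := by
  -- medial law
  have med : ∀ a b c d : M, (a * b) * (c * d) = (a * c) * (b * d) := by
    intro a b c d
    calc (a * b) * (c * d) = ((c * d) * b) * a := hli a b (c * d)
      _ = ((b * d) * c) * a := by rw [hli c d b]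
      _ = (a * c) * (b * d) := hli (b * d) c a
  -- extraction law
  have id3 : ∀ a b c : M, a * (b * c) = b * (a * c) := by
    intro a b c
    calc a * (b * c) = (e * a) * (b * c) := by rw [he]
      _ = (e * b) * (a * c) := med e a b c
      _ = b * (a * c) := by rw [he]
  -- paramedial law
  have par : ∀ a b c d : M, (a * b) * (c * d) = (d * b) * (c * a) := by
    intro a b c d
    calc (a * b) * (c * d) = (a * c) * (b * d) := med a b c d
      _ = ((e * a) * c) * (b * d) := by rw [he]
      _ = ((c * a) * e) * (b * d) := by rw [hli e a c]
      _ = ((c * a) * b) * (e * d) := med (c * a) e b d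
      _ = ((c * a) * b) * d := by rw [he]
      _ = (d * b) * (c * a) := hli (c * a) b d
  -- key identity: (a²w)a² = a²(wa²)
  have h7 : ∀ a w : M, ((a * a) * w) * (a * a) = (a * a) * (w * (a * a)) := by
    intro a w
    calc ((a * a) * w) * (a * a) = (a * w) * (a * (a * a)) := par (a * a) w a a
      _ = (a * a) * (w * (a * a)) := med a w a (a * a)
  constructor
  · rintro ⟨hr, hrr, _⟩
    intro a
    obtain ⟨x, hx⟩ := hr a
    obtain ⟨y, hy⟩ := hrr a
    have h2 : a * a = (a * a) * (a * x) := by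
      nth_rewrite 1 [hx]
      exact hli (a * x) a a
    refine ⟨x * (y * x), ?_⟩
    calc a = (a * a) * y := hy
      _ = ((a * a) * (a * x)) * y := by rw [← h2]
      _ = (y * (a * x)) * (a * a) := hli (a * a) (a * x) y
      _ = (a * (y * x)) * (a * a) := by rw [id3 y a x]
      _ = (a * (y * x)) * ((a * a) * (a * x)) := by rw [← h2]
      _ = (a * a) * ((a * (y * x)) * (a * x)) := id3 (a * (y * x)) (a * a) (a * x)
      _ = (a * a) * (a * ((a * (y * x)) * x)) := by rw [id3 (a * (y * x)) a x]
      _ = (a * a) * (a * ((x * (y * x)) * a)) := by rw [hli a (y * x) x]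
      _ = (a * a) * ((x * (y * x)) * (a * a)) := by rw [id3 a (x * (y * x)) a]
      _ = ((a * a) * (x * (y * x))) * (a * a) := (h7 a (x * (y * x))).symm
  · intro h
    refine ⟨?_, ?_, ?_⟩ <;> intro a <;> obtain ⟨w, hw⟩ := h a
    · -- regular
      have hy : a = (a * a) * (w * (a * a)) := hw.trans (h7 a w)
      set y := w * (a * a) with hydef
      have hya : a = (y * a) * a := hy.trans (hli a a y)
      have hs : a = a * ((a * a) * (w * a)) := by
        calc a = ((a * a) * w) * (a * a) := hw
          _ = (a * w) * (a * (a * a)) := par (a * a) w a a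
          _ = ((a * (a * a)) * w) * a := hli a w (a * (a * a))
          _ = ((w * (a * a)) * a) * a := by rw [hli a (a * a) w]
          _ = ((a * (w * a)) * a) * a := by rw [id3 w a a]
          _ = (a * a) * (a * (w * a)) := hli (a * (w * a)) a a
          _ = a * ((a * a) * (w * a)) := id3 (a * a) a (w * a)
      set s := (a * a) * (w * a) with hsdef
      refine ⟨y * s, ?_⟩
      calc a = (y * a) * a := hya
        _ = (y * (a * s)) * a := by rw [← hs]
        _ = (a * (y * s)) * a := by rw [id3 y a s]
    · -- right regular
      exact ⟨w * (a * a), hw.trans (h7 a w)⟩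
    · -- left regular
      refine ⟨(w * a) * a, ?_⟩
      calc a = ((a * a) * w) * (a * a) := hw
        _ = ((a * a) * a) * (w * a) := med (a * a) w a a
        _ = ((w * a) * a) * (a * a) := hli (a * a) a (w * a)
end

section
/- Let M be a completely regular right modular groupoid with a left identity e (ex = x for all x ∈ M). Then every (∈,∈∨q)-fuzzy (1,2)-ideal F of M (i.e., F(xy) ≥ min{F(x), F(y), 1/2} for all x,y ∈ M and F((xa)(yz)) ≥ min{F(x), F(y), F(z), 1/2} for all x,a,y,z ∈ M) is an (∈,∈∨q)-fuzzy bi-ideal of M, i.e., F(xy) ≥ min{F(x), F(y), 1/2} and F((xa)y) ≥ min{F(x), F(y), 1/2} for all x,a,y ∈ M. -/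
/-- in a completely regular right modular groupoid with left
identity, every (∈,∈∨q)-fuzzy (1,2)-ideal is an (∈,∈∨q)-fuzzy bi-ideal. -/
theorem stmt7 {M : Type*} [Mul M]
    (hli : ∀ a b c : M, (a * b) * c = (c * b) * a)
    (e : M) (he : ∀ x : M, e * x = x)
    (hreg : ∀ a : M, ∃ x, a = (a * x) * a)
    (hrr : ∀ a : M, ∃ y, a = (a * a) * y)
    (hlr : ∀ a : M, ∃ z, a = z * (a * a))
    (F : M → ℝ) (hF0 : ∀ x, 0 ≤ F x) (hF1 : ∀ x, F x ≤ 1)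
    (h1 : ∀ x y : M, F (x * y) ≥ min (min (F x) (F y)) (1/2))
    (h2 : ∀ x a y z : M,
      F ((x * a) * (y * z)) ≥ min (min (F x) (min (F y) (F z))) (1/2)) :
    (∀ x y : M, F (x * y) ≥ min (min (F x) (F y)) (1/2)) ∧
    (∀ x a y : M, F ((x * a) * y) ≥ min (min (F x) (F y)) (1/2)) := by
  -- medial law, from the left invertive law alone
  have med : ∀ a b c d : M, (a * b) * (c * d) = (a * c) * (b * d) := by
    intro a b c d
    calc (a * b) * (c * d) = ((c * d) * b) * a := hli a b (c * d)
      _ = ((b * d) * c) * a := by rw [hli c d b]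
      _ = (a * c) * (b * d) := hli (b * d) c a
  -- a(bc) = b(ac), using the left identity
  have L : ∀ a b c : M, a * (b * c) = b * (a * c) := by
    intro a b c
    calc a * (b * c) = (e * a) * (b * c) := by rw [he a]
      _ = (e * b) * (a * c) := med e a b c
      _ = b * (a * c) := by rw [he b]
  refine ⟨h1, fun x a y => ?_⟩
  obtain ⟨t, ht⟩ := hrr y
  have key : (x * a) * y = (x * (t * a)) * (y * y) := by
    calc (x * a) * y = (x * a) * ((y * y) * t) := by rw [← ht]
      _ = (y * y) * ((x * a) * t) := L (x * a) (y * y) t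
      _ = (y * (x * a)) * (y * t) := med y y (x * a) t
      _ = (x * (y * a)) * (y * t) := by rw [L y x a]
      _ = (x * y) * ((y * a) * t) := med x (y * a) y t
      _ = (x * y) * ((t * a) * y) := by rw [hli y a t]
      _ = (x * (t * a)) * (y * y) := (med x (t * a) y y).symm
  rw [key]
  refine le_trans ?_ (h2 x (t * a) y y)
  simp [min_self]
end

section
/- Let M be a completely regular right modular groupoid with a left identity e (ex = x for all x ∈ M). Then every (∈,∈∨q)-fuzzy (1,2)-ideal F of M (i.e., F(xy) ≥ min{F(x), F(y), 1/2} for all x,y ∈ M and F((xa)(yz)) ≥ min{F(x), F(y), F(z), 1/2} for all x,a,y,z ∈ M) satisfies F((ax)b) ≥ min{F(x), 1/2} for all a, x, b ∈ M; in particular F is an (∈,∈∨q)-fuzzy interior ideal of M. -/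
/-- in a completely regular right modular groupoid with left
identity, every (∈,∈∨q)-fuzzy (1,2)-ideal F satisfies
F((ax)b) ≥ min{F(x),1/2}; in particular F is an (∈,∈∨q)-fuzzy interior ideal. -/
theorem stmt8 {M : Type*} [Mul M]
    (hli : ∀ a b c : M, (a * b) * c = (c * b) * a)
    (e : M) (he : ∀ x : M, e * x = x)
    (hreg : ∀ a : M, ∃ x, a = (a * x) * a)
    (hrr : ∀ a : M, ∃ y, a = (a * a) * y)
    (hlr : ∀ a : M, ∃ z, a = z * (a * a))
    (F : M → ℝ) (hF0 : ∀ x, 0 ≤ F x) (hF1 : ∀ x, F x ≤ 1)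
    (h1 : ∀ x y : M, F (x * y) ≥ min (min (F x) (F y)) (1/2))
    (h2 : ∀ x a y z : M,
      F ((x * a) * (y * z)) ≥ min (min (F x) (min (F y) (F z))) (1/2)) :
    (∀ a x b : M, F ((a * x) * b) ≥ min (F x) (1/2)) ∧
    ((∀ x y : M, F (x * y) ≥ min (min (F x) (F y)) (1/2)) ∧
     (∀ x a y : M, F ((x * a) * y) ≥ min (F a) (1/2))) := by
  -- medial law (from the left invertive law alone)
  have medial : ∀ p q r s : M, (p * q) * (r * s) = (p * r) * (q * s) := by
    intro p q r s
    calc (p * q) * (r * s) = ((r * s) * q) * p := hli p q (r * s)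
      _ = ((q * s) * r) * p := by rw [hli r s q]
      _ = (p * r) * (q * s) := hli (q * s) r p
  -- a(bc) = b(ac)
  have lact : ∀ p q r : M, p * (q * r) = q * (p * r) := by
    intro p q r
    calc p * (q * r) = (e * p) * (q * r) := by rw [he]
      _ = (e * q) * (p * r) := medial e p q r
      _ = q * (p * r) := by rw [he]
  -- paramedial law
  have para : ∀ p q r s : M, (p * q) * (r * s) = (s * r) * (q * p) := by
    intro p q r s
    calc (p * q) * (r * s) = ((e * p) * q) * (r * s) := by rw [he]
      _ = ((q * p) * e) * (r * s) := by rw [hli e p q]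
      _ = ((q * p) * r) * (e * s) := medial (q * p) e r s
      _ = ((q * p) * r) * s := by rw [he]
      _ = (s * r) * (q * p) := hli (q * p) r s
  -- key fact: x = (x² w) x² for some w
  have hw : ∀ x : M, ∃ w, x = ((x * x) * w) * (x * x) := by
    intro x
    obtain ⟨s, hs⟩ := hreg x
    obtain ⟨t, ht⟩ := hrr x
    obtain ⟨z, hz⟩ := hlr x
    refine ⟨(s * t) * z, ?_⟩
    calc x = (x * s) * x := hs
      _ = (x * s) * ((x * x) * t) := by rw [← ht]
      _ = ((z * (x * x)) * s) * ((x * x) * t) := by rw [← hz]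
      _ = ((z * (x * x)) * (x * x)) * (s * t) := medial _ _ _ _
      _ = ((x * x) * ((x * x) * z)) * (s * t) := by rw [para z (x * x) x x]
      _ = ((s * t) * ((x * x) * z)) * (x * x) := hli _ _ _
      _ = ((x * x) * ((s * t) * z)) * (x * x) := by rw [lact (s * t) (x * x) z]
  -- main claim
  have main : ∀ a x b : M, F ((a * x) * b) ≥ min (F x) (1/2) := by
    intro a x b
    obtain ⟨w, hwx⟩ := hw x
    have key : (a * x) * b = (x * (b * (a * (w * x)))) * (x * x) := by
      calc (a * x) * b = (a * (((x * x) * w) * (x * x))) * b := by rw [← hwx]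
        _ = (a * (((x * x) * x) * (w * x))) * b := by rw [medial (x * x) w x x]
        _ = (((x * x) * x) * (a * (w * x))) * b := by rw [lact a ((x * x) * x) (w * x)]
        _ = (b * (a * (w * x))) * ((x * x) * x) := hli _ _ _
        _ = (x * x) * ((b * (a * (w * x))) * x) := lact _ _ _
        _ = (x * (b * (a * (w * x)))) * (x * x) := medial x x _ x
    have := h2 x (b * (a * (w * x))) x x
    rw [← key] at this
    calc F ((a * x) * b) ≥ min (min (F x) (min (F x) (F x))) (1/2) := this
      _ = min (F x) (1/2) := by rw [min_self, min_self]
  exact ⟨main, h1, fun x a y => main x a y⟩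
end

section
/- Let M be a completely regular right modular groupoid with a left identity, and let F be an (∈,∈∨q)-fuzzy bi-ideal of M (i.e., F(xy) ≥ min{F(x), F(y), 1/2} and F((xy)z) ≥ min{F(x), F(z), 1/2} for all x,y,z ∈ M). If F(a) < 1/2 for all a ∈ M, then F(a) = F(a²) for all a ∈ M, where a² = aa. -/
/-- if F is an (∈,∈∨q)-fuzzy bi-ideal of a completely regular right
modular groupoid with left identity and F(a) < 1/2 for all a, then F(a) = F(a²). -/
theorem stmt9 {M : Type*} [Mul M]
    (hli : ∀ a b c : M, (a * b) * c = (c * b) * a)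
    (e : M) (he : ∀ x : M, e * x = x)
    (hreg : ∀ a : M, ∃ x, a = (a * x) * a)
    (hrr : ∀ a : M, ∃ y, a = (a * a) * y)
    (hlr : ∀ a : M, ∃ z, a = z * (a * a))
    (F : M → ℝ) (hF0 : ∀ x, 0 ≤ F x) (hF1 : ∀ x, F x ≤ 1)
    (hb1 : ∀ x y : M, F (x * y) ≥ min (min (F x) (F y)) (1/2))
    (hb2 : ∀ x y z : M, F ((x * y) * z) ≥ min (min (F x) (F z)) (1/2))
    (hlt : ∀ a : M, F a < 1/2) :
    ∀ a : M, F a = F (a * a) := by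
  -- medial law
  have med : ∀ a b c d : M, (a * b) * (c * d) = (a * c) * (b * d) := by
    intro a b c d
    calc (a * b) * (c * d) = ((c * d) * b) * a := hli _ _ _
      _ = ((b * d) * c) * a := by rw [hli c d b]
      _ = (a * c) * (b * d) := hli _ _ _
  -- x (y z) = y (x z)
  have lsw : ∀ a b c : M, a * (b * c) = b * (a * c) := by
    intro a b c
    calc a * (b * c) = (e * a) * (b * c) := by rw [he]
      _ = (e * b) * (a * c) := med _ _ _ _
      _ = b * (a * c) := by rw [he]
  intro a
  -- find u with a = (a² u) a²
  obtain ⟨x, hx⟩ := hreg a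
  obtain ⟨y, hy⟩ := hrr a
  obtain ⟨z, hz⟩ := hlr a
  set u := (x * y) * z with hu
  have key : a = ((a * a) * u) * (a * a) := by
    have e1 : a * x = (x * y) * (a * a) := by
      nth_rewrite 1 [hy]; rw [hli]
    have h1 : a = ((x * y) * (a * a)) * a := by
      nth_rewrite 1 [hx]; rw [e1]
    have h2 : a = (a * (a * a)) * (x * y) := by
      nth_rewrite 1 [h1]; rw [hli]
    have h3 : a * (a * a) = ((a*a) * (a*a)) * z := by
      nth_rewrite 1 [hz]; rw [hli]
    have h4 : a = u * ((a*a) * (a*a)) := by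
      rw [hu]
      conv_lhs => rw [h2, h3, hli]
    have h5 : (a*a) * (a*a) = ((a*a) * a) * a := by rw [hli]
    calc a = u * (((a*a) * a) * a) := by rw [← h5]; exact h4
      _ = ((a*a) * a) * (u * a) := lsw _ _ _
      _ = ((u * a) * a) * (a*a) := hli _ _ _
      _ = ((a * a) * u) * (a*a) := by rw [hli u a a]
  have h6 : F (a*a) ≥ min (min (F a) (F a)) (1/2) := hb1 a a
  have h7 : F a ≥ min (min (F (a*a)) (F (a*a))) (1/2) := by
    conv_lhs => rw [key]
    exact hb2 _ _ _
  have l1 := hlt a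
  have l2 := hlt (a*a)
  simp [min_def] at h6 h7 <;> split_ifs at h6 h7 <;> linarith
end

section
/- Let M be a completely regular right modular groupoid with a left identity e (ex = x for all x ∈ M), and let F be an (∈,∈∨q)-fuzzy interior ideal of M (i.e., F(xy) ≥ min{F(x), F(y), 1/2} for all x,y ∈ M and F((xa)y) ≥ min{F(a), 1/2} for all x,a,y ∈ M). If F(a) < 1/2 for all a ∈ M, then F(a) = F(a²) for all a ∈ M, where a² = aa. -/
/-- if F is an (∈,∈∨q)-fuzzy interior ideal of a completely regular
right modular groupoid with left identity and F(a) < 1/2 for all a, then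
F(a) = F(a²). -/
theorem stmt10 {M : Type*} [Mul M]
    (hli : ∀ a b c : M, (a * b) * c = (c * b) * a)
    (e : M) (he : ∀ x : M, e * x = x)
    (hreg : ∀ a : M, ∃ x, a = (a * x) * a)
    (hrr : ∀ a : M, ∃ y, a = (a * a) * y)
    (hlr : ∀ a : M, ∃ z, a = z * (a * a))
    (F : M → ℝ) (hF0 : ∀ x, 0 ≤ F x) (hF1 : ∀ x, F x ≤ 1)
    (hi1 : ∀ x y : M, F (x * y) ≥ min (min (F x) (F y)) (1/2))
    (hi2 : ∀ x a y : M, F ((x * a) * y) ≥ min (F a) (1/2))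
    (hlt : ∀ a : M, F a < 1/2) :
    ∀ a : M, F a = F (a * a) := by
  intro a
  obtain ⟨z, hz⟩ := hlr a
  -- a = ((z*e) * a²) * e
  have key : a = ((z * e) * (a * a)) * e := by
    calc a = z * (a * a) := hz
    _ = (e * z) * (a * a) := by rw [he]
    _ = ((a * a) * z) * e := hli _ _ _
    _ = (((a * a) * e) * z) * e := by
        congr 1
        calc (a * a) * z = ((e * a) * a) * z := by rw [he]
        _ = ((a * a) * e) * z := by rw [hli e a a]
    _ = ((z * e) * (a * a)) * e := by rw [hli (a*a) e z]
  have h1 : F a ≥ F (a * a) := by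
    have hb := hi2 (z * e) (a * a) e
    rw [← key] at hb
    rwa [min_eq_left (hlt (a*a)).le] at hb
  have h2 : F (a * a) ≥ F a := by
    have := hi1 a a
    have hm : min (min (F a) (F a)) (1/2) = F a := by
      rw [min_self]; exact min_eq_left (hlt a).le
    linarith [hi1 a a, hm ▸ hi1 a a]
  linarith
end

section
/- Let M be a right modular groupoid, k ∈ [0,1), and F a fuzzy subset of M. Then F is an (∈,∈∨q_k)-fuzzy subgroupoid of M (i.e., for all t,r ∈ (0,1] and x,y ∈ M: F(x) ≥ t and F(y) ≥ r imply F(xy) ≥ min{t,r} or F(xy) + min{t,r} + k > 1) if and only if F(xy) ≥ min{F(x), F(y), (1−k)/2} for all x,y ∈ M. -/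
/-- F is an (∈,∈∨q_k)-fuzzy subgroupoid of a right modular
groupoid M iff F(xy) ≥ min{F(x), F(y), (1−k)/2} for all x,y. -/
theorem stmt11 {M : Type*} [Mul M]
    (hli : ∀ a b c : M, (a * b) * c = (c * b) * a)
    (k : ℝ) (hk0 : 0 ≤ k) (hk1 : k < 1)
    (F : M → ℝ) (hF0 : ∀ x, 0 ≤ F x) (hF1 : ∀ x, F x ≤ 1) :
    (∀ t r : ℝ, 0 < t → t ≤ 1 → 0 < r → r ≤ 1 → ∀ x y : M,
        F x ≥ t → F y ≥ r →
        (F (x * y) ≥ min t r ∨ F (x * y) + min t r + k > 1)) ↔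
    (∀ x y : M, F (x * y) ≥ min (min (F x) (F y)) ((1 - k)/2)) := by
  constructor
  · intro h x y
    set t0 := min (min (F x) (F y)) ((1 - k)/2) with ht0
    rcases le_or_gt t0 0 with h0 | h0
    · exact le_trans h0 (hF0 _)
    · have ht0le : t0 ≤ (1 - k)/2 := min_le_right _ _
      have ht1 : t0 ≤ 1 := by linarith
      have hxt : F x ≥ t0 := le_trans (le_trans (min_le_left _ _) (min_le_left _ _)) le_rfl
      have hyt : F y ≥ t0 := le_trans (le_trans (min_le_left _ _) (min_le_right _ _)) le_rfl
      rcases h t0 t0 h0 ht1 h0 ht1 x y hxt hyt with h1 | h1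
      · simpa using h1
      · simp only [min_self] at h1
        linarith
  · intro h t r ht0 ht1 hr0 hr1 x y hx hy
    have key : F (x * y) ≥ min (min t r) ((1 - k)/2) := by
      refine le_trans ?_ (h x y)
      exact min_le_min (min_le_min hx hy) le_rfl
    rcases le_or_gt (min t r) ((1 - k)/2) with hc | hc
    · left
      have : min (min t r) ((1 - k)/2) = min t r := min_eq_left hc
      rwa [this] at key
    · right
      have : min (min t r) ((1 - k)/2) = (1 - k)/2 := min_eq_right hc.le
      rw [this] at key
      linarith
end

section
/- Let M be a right modular groupoid, k ∈ [0,1), and F a fuzzy subset of M. Then F is an (∈,∈∨q_k)-fuzzy left ideal of M (i.e., for all t ∈ (0,1] and x,y ∈ M: F(y) ≥ t implies F(xy) ≥ t or F(xy) + t + k > 1) if and only if F(xy) ≥ min{F(y), (1−k)/2} for all x,y ∈ M. Likewise, F is an (∈,∈∨q_k)-fuzzy right ideal of M (i.e., for all t ∈ (0,1] and x,y ∈ M: F(y) ≥ t implies F(yx) ≥ t or F(yx) + t + k > 1) if and only if F(xy) ≥ min{F(x), (1−k)/2} for all x,y ∈ M. -/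
lemma stmt12_aux {M : Type*} (k : ℝ) (hk1 : k < 1)
    (F : M → ℝ) (hF0 : ∀ x, 0 ≤ F x) (hF1 : ∀ x, F x ≤ 1) (g : M → M → M) :
    (∀ t : ℝ, 0 < t → t ≤ 1 → ∀ x y : M, F y ≥ t →
        (F (g x y) ≥ t ∨ F (g x y) + t + k > 1)) ↔
     (∀ x y : M, F (g x y) ≥ min (F y) ((1 - k)/2)) := by
  constructor
  · intro h x y
    set t := min (F y) ((1 - k)/2) with ht
    rcases eq_or_lt_of_le (hF0 y) with h0 | h0
    · have : t ≤ 0 := by rw [ht, ← h0]; exact min_le_left _ _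
      linarith [hF0 (g x y)]
    · have ht0 : 0 < t := lt_min h0 (by linarith)
      have ht1 : t ≤ 1 := le_trans (min_le_left _ _) (hF1 y)
      rcases h t ht0 ht1 x y (min_le_left _ _) with h1 | h1
      · exact h1
      · have : t ≤ (1 - k)/2 := min_le_right _ _
        linarith
  · intro h t ht0 ht1 x y hy
    rcases le_or_gt t ((1 - k)/2) with hc | hc
    · left
      have := h x y
      have : min (F y) ((1 - k)/2) ≥ t := le_min hy hc
      linarith [h x y]
    · right
      have hmin : min (F y) ((1 - k)/2) = (1 - k)/2 := by
        apply min_eq_right; linarith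
      have := h x y
      rw [hmin] at this
      linarith

/-- F is an (∈,∈∨q_k)-fuzzy left ideal iff
F(xy) ≥ min{F(y),(1−k)/2}; likewise F is an (∈,∈∨q_k)-fuzzy right ideal iff
F(xy) ≥ min{F(x),(1−k)/2}. -/
theorem stmt12 {M : Type*} [Mul M]
    (hli : ∀ a b c : M, (a * b) * c = (c * b) * a)
    (k : ℝ) (hk0 : 0 ≤ k) (hk1 : k < 1)
    (F : M → ℝ) (hF0 : ∀ x, 0 ≤ F x) (hF1 : ∀ x, F x ≤ 1) :
    ((∀ t : ℝ, 0 < t → t ≤ 1 → ∀ x y : M, F y ≥ t →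
        (F (x * y) ≥ t ∨ F (x * y) + t + k > 1)) ↔
     (∀ x y : M, F (x * y) ≥ min (F y) ((1 - k)/2))) ∧
    ((∀ t : ℝ, 0 < t → t ≤ 1 → ∀ x y : M, F y ≥ t →
        (F (y * x) ≥ t ∨ F (y * x) + t + k > 1)) ↔
     (∀ x y : M, F (x * y) ≥ min (F x) ((1 - k)/2))) := by
  constructor
  · exact stmt12_aux k hk1 F hF0 hF1 (fun x y => x * y)
  · have := stmt12_aux k hk1 F hF0 hF1 (fun x y => y * x)
    simp only [this]
    exact ⟨fun h x y => h y x, fun h x y => h y x⟩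
end

section
/- Let M be a right modular groupoid, k ∈ [0,1), and F a fuzzy subset of M. Then F is an (∈,∈∨q_k)-fuzzy interior ideal of M (i.e., for all t,r ∈ (0,1] and x,a,y ∈ M: (i) F(x) ≥ t and F(y) ≥ r imply F(xy) ≥ min{t,r} or F(xy) + min{t,r} + k > 1, and (ii) F(a) ≥ t implies F((xa)y) ≥ t or F((xa)y) + t + k > 1) if and only if F(xy) ≥ min{F(x), F(y), (1−k)/2} for all x,y ∈ M and F((xa)y) ≥ min{F(a), (1−k)/2} for all x,a,y ∈ M. -/
/-- F is an (∈,∈∨q_k)-fuzzy interior ideal iff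
F(xy) ≥ min{F(x),F(y),(1−k)/2} and F((xa)y) ≥ min{F(a),(1−k)/2}. -/
theorem stmt13 {M : Type*} [Mul M]
    (hli : ∀ a b c : M, (a * b) * c = (c * b) * a)
    (k : ℝ) (hk0 : 0 ≤ k) (hk1 : k < 1)
    (F : M → ℝ) (hF0 : ∀ x, 0 ≤ F x) (hF1 : ∀ x, F x ≤ 1) :
    ((∀ t r : ℝ, 0 < t → t ≤ 1 → 0 < r → r ≤ 1 → ∀ x y : M,
        F x ≥ t → F y ≥ r →
        (F (x * y) ≥ min t r ∨ F (x * y) + min t r + k > 1)) ∧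
     (∀ t : ℝ, 0 < t → t ≤ 1 → ∀ x a y : M, F a ≥ t →
        (F ((x * a) * y) ≥ t ∨ F ((x * a) * y) + t + k > 1))) ↔
    ((∀ x y : M, F (x * y) ≥ min (min (F x) (F y)) ((1 - k)/2)) ∧
     (∀ x a y : M, F ((x * a) * y) ≥ min (F a) ((1 - k)/2))) := by
  have hhalf : 0 < (1 - k)/2 := by linarith
  constructor
  · rintro ⟨h1, h2⟩
    constructor
    · intro x y
      set m := min (min (F x) (F y)) ((1 - k)/2) with hm
      rcases le_or_gt m 0 with h | hmpos
      · exact le_trans h (hF0 _)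
      · have hm1 : m ≤ 1 := le_trans (min_le_right _ _) (by linarith)
        have hmx : F x ≥ m := le_trans (le_trans (min_le_left _ _) (min_le_left _ _)) le_rfl
        have hmy : F y ≥ m := le_trans (min_le_left _ _) (min_le_right _ _)
        rcases h1 m m hmpos hm1 hmpos hm1 x y hmx hmy with h | h
        · simpa using h
        · simp only [min_self] at h
          have hmk : m ≤ (1 - k)/2 := min_le_right _ _
          by_contra hc
          push_neg at hc
          linarith
    · intro x a y
      set m := min (F a) ((1 - k)/2) with hm
      rcases le_or_gt m 0 with h | hmpos
      · exact le_trans h (hF0 _)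
      · have hm1 : m ≤ 1 := le_trans (min_le_right _ _) (by linarith)
        have hma : F a ≥ m := min_le_left _ _
        rcases h2 m hmpos hm1 x a y hma with h | h
        · exact h
        · have hmk : m ≤ (1 - k)/2 := min_le_right _ _
          by_contra hc
          push_neg at hc
          linarith
  · rintro ⟨h1, h2⟩
    constructor
    · intro t r ht0 ht1 hr0 hr1 x y hx hy
      have key := h1 x y
      have hmin : min (min (F x) (F y)) ((1 - k)/2) ≥ min (min t r) ((1 - k)/2) := by
        apply min_le_min _ le_rfl
        exact min_le_min hx hy
      rcases le_or_gt (min t r) ((1 - k)/2) with h | h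
      · left
        calc min t r = min (min t r) ((1 - k)/2) := (min_eq_left h).symm
          _ ≤ min (min (F x) (F y)) ((1 - k)/2) := hmin
          _ ≤ F (x * y) := key
      · right
        have e : min (min t r) ((1 - k)/2) = (1 - k)/2 := min_eq_right h.le
        have : F (x * y) ≥ (1 - k)/2 := by rw [← e]; exact le_trans hmin key
        linarith
    · intro t ht0 ht1 x a y ha
      have key := h2 x a y
      have hmin : min (F a) ((1 - k)/2) ≥ min t ((1 - k)/2) := min_le_min ha le_rfl
      rcases le_or_gt t ((1 - k)/2) with h | h
      · left
        calc t = min t ((1 - k)/2) := (min_eq_left h).symm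
          _ ≤ min (F a) ((1 - k)/2) := hmin
          _ ≤ F ((x * a) * y) := key
      · right
        have e : min t ((1 - k)/2) = (1 - k)/2 := min_eq_right h.le
        have : F ((x * a) * y) ≥ (1 - k)/2 := by rw [← e]; exact le_trans hmin key
        linarith
end

section
/- Let M be a completely regular right modular groupoid with a left identity, and let k ∈ [0,1). Then a fuzzy subset F of M is an (∈,∈∨q_k)-fuzzy right ideal of M (i.e., F(xy) ≥ min{F(x), (1−k)/2} for all x,y ∈ M) if and only if F is an (∈,∈∨q_k)-fuzzy left ideal of M (i.e., F(xy) ≥ min{F(y), (1−k)/2} for all x,y ∈ M). -/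
/-- in a completely regular right modular groupoid with left
identity, F is an (∈,∈∨q_k)-fuzzy right ideal iff it is an (∈,∈∨q_k)-fuzzy
left ideal. -/
theorem stmt15 {M : Type*} [Mul M]
    (hli : ∀ a b c : M, (a * b) * c = (c * b) * a)
    (e : M) (he : ∀ x : M, e * x = x)
    (hreg : ∀ a : M, ∃ x, a = (a * x) * a)
    (hrr : ∀ a : M, ∃ y, a = (a * a) * y)
    (hlr : ∀ a : M, ∃ z, a = z * (a * a))
    (k : ℝ) (hk0 : 0 ≤ k) (hk1 : k < 1)
    (F : M → ℝ) (hF0 : ∀ x, 0 ≤ F x) (hF1 : ∀ x, F x ≤ 1) :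
    (∀ x y : M, F (x * y) ≥ min (F x) ((1 - k)/2)) ↔
    (∀ x y : M, F (x * y) ≥ min (F y) ((1 - k)/2)) := by
  constructor
  · intro h x y
    have hx : x * y = (y * x) * e := by
      conv_lhs => rw [← he x]
      rw [hli]
    rw [hx]
    calc F ((y * x) * e) ≥ min (F (y * x)) ((1-k)/2) := h _ _
      _ ≥ min (min (F y) ((1-k)/2)) ((1-k)/2) := by
          exact min_le_min (h y x) le_rfl
      _ = min (F y) ((1-k)/2) := by rw [min_assoc, min_self]
  · intro h x y
    obtain ⟨y₀, hy₀⟩ := hrr x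
    have hx : x * y = (y * y₀) * (x * x) := by
      conv_lhs => rw [hy₀]
      rw [hli]
    rw [hx]
    calc F ((y * y₀) * (x * x)) ≥ min (F (x * x)) ((1-k)/2) := h _ _
      _ ≥ min (min (F x) ((1-k)/2)) ((1-k)/2) := min_le_min (h x x) le_rfl
      _ = min (F x) ((1-k)/2) := by rw [min_assoc, min_self]
end

section
/- Let M be a completely regular right modular groupoid with a left identity, and let k ∈ [0,1). Then a fuzzy subset F of M is an (∈,∈∨q_k)-fuzzy two-sided ideal of M (i.e., F(xy) ≥ min{F(x), (1−k)/2} and F(xy) ≥ min{F(y), (1−k)/2} for all x,y ∈ M) if and only if F is an (∈,∈∨q_k)-fuzzy interior ideal of M (i.e., F(xy) ≥ min{F(x), F(y), (1−k)/2} for all x,y ∈ M and F((xa)y) ≥ min{F(a), (1−k)/2} for all x,a,y ∈ M). -/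
/-- in a completely regular right modular groupoid with left
identity, F is an (∈,∈∨q_k)-fuzzy two-sided ideal iff it is an
(∈,∈∨q_k)-fuzzy interior ideal. -/
theorem stmt16 {M : Type*} [Mul M]
    (hli : ∀ a b c : M, (a * b) * c = (c * b) * a)
    (e : M) (he : ∀ x : M, e * x = x)
    (hreg : ∀ a : M, ∃ x, a = (a * x) * a)
    (hrr : ∀ a : M, ∃ y, a = (a * a) * y)
    (hlr : ∀ a : M, ∃ z, a = z * (a * a))
    (k : ℝ) (hk0 : 0 ≤ k) (hk1 : k < 1)
    (F : M → ℝ) (hF0 : ∀ x, 0 ≤ F x) (hF1 : ∀ x, F x ≤ 1) :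
    ((∀ x y : M, F (x * y) ≥ min (F x) ((1 - k)/2)) ∧
     (∀ x y : M, F (x * y) ≥ min (F y) ((1 - k)/2))) ↔
    ((∀ x y : M, F (x * y) ≥ min (min (F x) (F y)) ((1 - k)/2)) ∧
     (∀ x a y : M, F ((x * a) * y) ≥ min (F a) ((1 - k)/2))) := by
  -- medial law
  have med : ∀ a b c d : M, (a * b) * (c * d) = (a * c) * (b * d) := by
    intro a b c d
    calc (a * b) * (c * d) = ((c * d) * b) * a := hli _ _ _
    _ = ((b * d) * c) * a := by rw [hli c d b]
    _ = (a * c) * (b * d) := hli _ _ _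
  -- a(bc) = b(ac)
  have swap : ∀ a b c : M, a * (b * c) = b * (a * c) := by
    intro a b c
    calc a * (b * c) = (e * a) * (b * c) := by rw [he]
    _ = (e * b) * (a * c) := med e a b c
    _ = b * (a * c) := by rw [he]
  constructor
  · rintro ⟨h1, h2⟩
    constructor
    · intro x y
      exact le_trans (min_le_min (min_le_left _ _) le_rfl) (h1 x y)
    · intro x a y
      have := h1 (x * a) y
      have hxa := h2 x a
      calc min (F a) ((1-k)/2)
          = min (min (F a) ((1-k)/2)) ((1-k)/2) := by rw [min_assoc, min_self]
        _ ≤ min (F (x * a)) ((1-k)/2) := min_le_min hxa le_rfl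
        _ ≤ F ((x * a) * y) := h1 (x * a) y
  · rintro ⟨h1, h2⟩
    constructor
    · intro x y
      obtain ⟨w, hw⟩ := hrr x
      have hx : x = (w * x) * x := hw.trans (hli x x w)
      have : x * y = ((w * x) * x) * y := by rw [← hx]
      rw [this]
      exact h2 (w * x) x y
    · intro x y
      obtain ⟨w, hw⟩ := hrr y
      have : x * y = (y * y) * (x * w) := by
        conv_lhs => rw [hw]
        rw [swap]
      rw [this]
      exact h2 y y (x * w)
end

section
/- Let M be a completely regular right modular groupoid with a left identity, and let k ∈ [0,1). Then a fuzzy subset F of M is an (∈,∈∨q_k)-fuzzy generalized bi-ideal of M (i.e., F((xy)z) ≥ min{F(x), F(z), (1−k)/2} for all x,y,z ∈ M) if and only if F is an (∈,∈∨q_k)-fuzzy bi-ideal of M (i.e., F(xy) ≥ min{F(x), F(y), (1−k)/2} for all x,y ∈ M and F((xy)z) ≥ min{F(x), F(z), (1−k)/2} for all x,y,z ∈ M). -/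
/-- in a completely regular right modular groupoid with left
identity, F is an (∈,∈∨q_k)-fuzzy generalized bi-ideal iff it is an
(∈,∈∨q_k)-fuzzy bi-ideal. -/
theorem stmt17 {M : Type*} [Mul M]
    (hli : ∀ a b c : M, (a * b) * c = (c * b) * a)
    (e : M) (he : ∀ x : M, e * x = x)
    (hreg : ∀ a : M, ∃ x, a = (a * x) * a)
    (hrr : ∀ a : M, ∃ y, a = (a * a) * y)
    (hlr : ∀ a : M, ∃ z, a = z * (a * a))
    (k : ℝ) (hk0 : 0 ≤ k) (hk1 : k < 1)
    (F : M → ℝ) (hF0 : ∀ x, 0 ≤ F x) (hF1 : ∀ x, F x ≤ 1) :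
    (∀ x y z : M, F ((x * y) * z) ≥ min (min (F x) (F z)) ((1 - k)/2)) ↔
    ((∀ x y : M, F (x * y) ≥ min (min (F x) (F y)) ((1 - k)/2)) ∧
     (∀ x y z : M, F ((x * y) * z) ≥ min (min (F x) (F z)) ((1 - k)/2))) := by
  constructor
  · intro h
    refine ⟨?_, h⟩
    -- medial law
    have med : ∀ a b c d : M, (a * b) * (c * d) = (a * c) * (b * d) := by
      intro a b c d
      rw [hli a b (c * d), hli c d b, hli (b * d) c a]
    -- a(bc) = b(ac)
    have law2 : ∀ a b c : M, a * (b * c) = b * (a * c) := by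
      intro a b c
      calc a * (b * c) = (e * a) * (b * c) := by rw [he]
        _ = (e * b) * (a * c) := med e a b c
        _ = b * (a * c) := by rw [he]
    -- F(a²) ≥ min(F a, (1-k)/2)
    have sq : ∀ a : M, F (a * a) ≥ min (F a) ((1 - k)/2) := by
      intro a
      obtain ⟨z, hz⟩ := hlr a
      have key : (a * (z * a)) * a = a * a := by
        rw [law2 a z a, ← hz]
      have := h a (z * a) a
      rw [key, min_self] at this
      exact this
    intro a b
    obtain ⟨y, hy⟩ := hrr a
    have key : a * b = (b * y) * (a * a) := by
      conv_lhs => rw [hy]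
      exact hli (a * a) y b
    have h1 := h b y (a * a)
    rw [← key] at h1
    have h2 := sq a
    refine le_trans ?_ h1
    have hA : min (min (F a) (F b)) ((1 - k)/2) ≤ F (a * a) := by
      refine le_trans ?_ h2
      exact le_min (le_trans (min_le_left _ _) (min_le_left _ _)) (min_le_right _ _)
    have hB : min (min (F a) (F b)) ((1 - k)/2) ≤ F b :=
      le_trans (min_le_left _ _) (min_le_right _ _)
    exact le_min (le_min hB hA) (min_le_right _ _)
  · intro h
    exact h.2
end

section
/- Let M be a completely regular right modular groupoid with a left identity, and let k ∈ [0,1). Then a fuzzy subset F of M is an (∈,∈∨q_k)-fuzzy bi-ideal of M (i.e., F(xy) ≥ min{F(x), F(y), (1−k)/2} for all x,y ∈ M and F((xy)z) ≥ min{F(x), F(z), (1−k)/2} for all x,y,z ∈ M) if and only if F is an (∈,∈∨q_k)-fuzzy two-sided ideal of M (i.e., F(xy) ≥ min{F(x), (1−k)/2} and F(xy) ≥ min{F(y), (1−k)/2} for all x,y ∈ M). -/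
/-- in a completely regular right modular groupoid with left
identity, F is an (∈,∈∨q_k)-fuzzy bi-ideal iff it is an (∈,∈∨q_k)-fuzzy
two-sided ideal. -/
theorem stmt18 {M : Type*} [Mul M]
    (hli : ∀ a b c : M, (a * b) * c = (c * b) * a)
    (e : M) (he : ∀ x : M, e * x = x)
    (hreg : ∀ a : M, ∃ x, a = (a * x) * a)
    (hrr : ∀ a : M, ∃ y, a = (a * a) * y)
    (hlr : ∀ a : M, ∃ z, a = z * (a * a))
    (k : ℝ) (hk0 : 0 ≤ k) (hk1 : k < 1)
    (F : M → ℝ) (hF0 : ∀ x, 0 ≤ F x) (hF1 : ∀ x, F x ≤ 1) :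
    ((∀ x y : M, F (x * y) ≥ min (min (F x) (F y)) ((1 - k)/2)) ∧
     (∀ x y z : M, F ((x * y) * z) ≥ min (min (F x) (F z)) ((1 - k)/2))) ↔
    ((∀ x y : M, F (x * y) ≥ min (F x) ((1 - k)/2)) ∧
     (∀ x y : M, F (x * y) ≥ min (F y) ((1 - k)/2))) := by
  -- medial law
  have med : ∀ p q r s : M, (p*q)*(r*s) = (p*r)*(q*s) := by
    intro p q r s
    calc (p*q)*(r*s) = ((r*s)*q)*p := hli p q (r*s)
      _ = ((q*s)*r)*p := by rw [hli r s q]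
      _ = (p*r)*(q*s) := hli (q*s) r p
  -- left permutation law
  have lperm : ∀ p q r : M, p*(q*r) = q*(p*r) := by
    intro p q r
    calc p*(q*r) = (e*p)*(q*r) := by rw [he]
      _ = (e*q)*(p*r) := med e p q r
      _ = q*(p*r) := by rw [he]
  -- key identity for the right-ideal bound
  have keyR : ∀ a b : M, ∃ c, a*b = (a*c)*(a*a) := by
    intro a b
    obtain ⟨x, hx⟩ := hreg a
    obtain ⟨y, hy⟩ := hrr a
    obtain ⟨z, hz⟩ := hlr a
    refine ⟨((x*y)*z)*(b*a), ?_⟩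
    have hu : a = (a*a)*(((x*y)*z)*(a*a)) := by
      calc a = (a*x)*a := hx
        _ = (a*x)*((a*a)*y) := by rw [← hy]
        _ = (a*(a*a))*(x*y) := med a x (a*a) y
        _ = ((z*(a*a))*(a*a))*(x*y) := by rw [← hz]
        _ = (((a*a)*(a*a))*z)*(x*y) := by rw [hli z (a*a) (a*a)]
        _ = ((x*y)*z)*((a*a)*(a*a)) := hli ((a*a)*(a*a)) z (x*y)
        _ = (a*a)*(((x*y)*z)*(a*a)) := lperm ((x*y)*z) (a*a) (a*a)
    calc a*b = ((a*a)*(((x*y)*z)*(a*a)))*b := by rw [← hu]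
      _ = (b*(((x*y)*z)*(a*a)))*(a*a) := hli (a*a) (((x*y)*z)*(a*a)) b
      _ = (((x*y)*z)*(b*(a*a)))*(a*a) := by rw [lperm b ((x*y)*z) (a*a)]
      _ = (((x*y)*z)*(a*(b*a)))*(a*a) := by rw [lperm b a a]
      _ = (a*(((x*y)*z)*(b*a)))*(a*a) := by rw [lperm ((x*y)*z) a (b*a)]
  -- key identity for the left-ideal bound
  have keyL : ∀ a b : M, ∃ c, a*b = (b*c)*b := by
    intro a b
    obtain ⟨y, hy⟩ := hrr b
    obtain ⟨z, hz⟩ := hlr b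
    refine ⟨z*a, ?_⟩
    calc a*b = (e*a)*b := by rw [he]
      _ = (b*a)*e := hli e a b
      _ = (((b*b)*y)*a)*e := by rw [← hy]
      _ = ((a*y)*(b*b))*e := by rw [hli (b*b) y a]
      _ = (e*(b*b))*(a*y) := hli (a*y) (b*b) e
      _ = (b*b)*(a*y) := by rw [he]
      _ = ((a*y)*b)*b := hli b b (a*y)
      _ = ((b*y)*a)*b := by rw [hli a y b]
      _ = (b*a)*(b*y) := hli (b*y) a b
      _ = (e*(b*a))*(b*y) := by rw [he]
      _ = ((b*y)*(b*a))*e := hli e (b*a) (b*y)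
      _ = (((b*a)*y)*b)*e := by rw [hli b y (b*a)]
      _ = (e*b)*((b*a)*y) := hli ((b*a)*y) b e
      _ = b*((b*a)*y) := by rw [he]
      _ = (z*(b*b))*((b*a)*y) := by rw [← hz]
      _ = (((b*a)*y)*(b*b))*z := hli z (b*b) ((b*a)*y)
      _ = (((b*b)*y)*(b*a))*z := by rw [hli (b*a) y (b*b)]
      _ = (b*(b*a))*z := by rw [← hy]
      _ = (z*(b*a))*b := hli b (b*a) z
      _ = ((e*z)*(b*a))*b := by rw [he]
      _ = (((b*a)*z)*e)*b := by rw [hli e z (b*a)]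
      _ = (((z*a)*b)*e)*b := by rw [hli b a z]
      _ = ((e*b)*(z*a))*b := by rw [hli (z*a) b e]
      _ = (b*(z*a))*b := by rw [he]
  constructor
  · rintro ⟨hprod, hbi⟩
    constructor
    · intro a b
      obtain ⟨c, hc⟩ := keyR a b
      have h1 : F (a*a) ≥ min (F a) ((1 - k)/2) := by
        have h := hprod a a
        rwa [min_self] at h
      have h2 := hbi a c (a*a)
      rw [← hc] at h2
      refine le_trans ?_ h2
      exact le_min (le_min (min_le_left _ _) h1) (min_le_right _ _)
    · intro a b
      obtain ⟨c, hc⟩ := keyL a b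
      have h2 := hbi b c b
      rw [← hc, min_self] at h2
      exact h2
  · rintro ⟨hR, hL⟩
    constructor
    · intro a b
      exact le_trans (min_le_min (min_le_left _ _) le_rfl) (hR a b)
    · intro a b c
      exact le_trans (min_le_min (min_le_right _ _) le_rfl) (hL (a*b) c)
end

section
/- Let M be a completely regular right modular groupoid, and let k ∈ [0,1). If F is an (∈,∈∨q_k)-fuzzy right ideal of M (i.e., F(xy) ≥ min{F(x), (1−k)/2} for all x,y ∈ M) and G is an (∈,∈∨q_k)-fuzzy left ideal of M (i.e., G(xy) ≥ min{G(y), (1−k)/2} for all x,y ∈ M), then F ∧_k G = F ∘_k G, where (F ∧_k G)(a) = min{F(a), G(a), (1−k)/2} and (F ∘_k G)(a) = min{(F∘G)(a), (1−k)/2}, with the product (F∘G)(a) = sup{ min{F(p), G(q)} : p, q ∈ M, a = pq } (and (F∘G)(a) = 0 if a admits no such decomposition). -/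
/-- in a completely regular right modular groupoid, for an
(∈,∈∨q_k)-fuzzy right ideal F and an (∈,∈∨q_k)-fuzzy left ideal G one has
F ∧_k G = F ∘_k G.  Here (F ∘ G)(a) = sup{min{F(p),G(q)} : a = pq}, which is
0 when a has no factorization (Real.sSup of the empty set is 0). -/
theorem stmt19 {M : Type*} [Mul M]
    (hli : ∀ a b c : M, (a * b) * c = (c * b) * a)
    (hreg : ∀ a : M, ∃ x, a = (a * x) * a)
    (hrr : ∀ a : M, ∃ y, a = (a * a) * y)
    (hlr : ∀ a : M, ∃ z, a = z * (a * a))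
    (k : ℝ) (hk0 : 0 ≤ k) (hk1 : k < 1)
    (F G : M → ℝ)
    (hF0 : ∀ x, 0 ≤ F x) (hF1 : ∀ x, F x ≤ 1)
    (hG0 : ∀ x, 0 ≤ G x) (hG1 : ∀ x, G x ≤ 1)
    (hF : ∀ x y : M, F (x * y) ≥ min (F x) ((1 - k)/2))
    (hG : ∀ x y : M, G (x * y) ≥ min (G y) ((1 - k)/2)) :
    ∀ a : M,
      min (min (F a) (G a)) ((1 - k)/2) =
      min (sSup {v : ℝ | ∃ p q : M, a = p * q ∧ v = min (F p) (G q)})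
        ((1 - k)/2) := by
  intro a
  set t : ℝ := (1 - k)/2 with ht
  set S : Set ℝ := {v : ℝ | ∃ p q : M, a = p * q ∧ v = min (F p) (G q)} with hS
  have hbdd : BddAbove S := by
    refine ⟨1, ?_⟩
    rintro v ⟨p, q, _, rfl⟩
    exact le_trans (min_le_left _ _) (hF1 p)
  obtain ⟨x, hx⟩ := hreg a
  have hmem : min (F (a * x)) (G a) ∈ S := ⟨a * x, a, hx, rfl⟩
  have hM : min (min (F a) (G a)) t ≤ min (F (a * x)) (G a) := by
    refine le_min ?_ ?_
    · exact le_trans (min_le_min (min_le_left _ _) le_rfl) (hF a x)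
    · exact le_trans (min_le_left _ _) (min_le_right _ _)
  apply le_antisymm
  · refine le_min (le_trans hM (le_csSup hbdd hmem)) (min_le_right _ _)
  · -- each element of S, capped at t, is ≤ LHS
    have key : ∀ v ∈ S, min v t ≤ min (min (F a) (G a)) t := by
      rintro v ⟨p, q, ha, rfl⟩
      refine le_min (le_min ?_ ?_) (min_le_right _ _)
      · calc min (min (F p) (G q)) t ≤ min (F p) t :=
              min_le_min (min_le_left _ _) le_rfl
          _ ≤ F (p * q) := hF p q
          _ = F a := by rw [← ha]
      · calc min (min (F p) (G q)) t ≤ min (G q) t :=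
              min_le_min (min_le_right _ _) le_rfl
          _ ≤ G (p * q) := hG p q
          _ = G a := by rw [← ha]
    rcases le_or_gt (sSup S) t with h | h
    · rw [min_eq_left h]
      refine csSup_le ⟨_, hmem⟩ ?_
      intro v hv
      have hvt : v ≤ t := le_trans (le_csSup hbdd hv) h
      simpa [min_eq_left hvt] using key v hv
    · rw [min_eq_right h.le]
      obtain ⟨v, hv, hvt⟩ := exists_lt_of_lt_csSup ⟨_, hmem⟩ h
      simpa [min_eq_right hvt.le] using key v hv
end
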